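/- Let Q be an n×n substochastic matrix. Then Q is transient if and only if for every index i the i-th row sum of Q^n is strictly less than 1 (equivalently, starting from any state, termination occurs with positive probability within at most n transitions). -/
import Mathlib


open Matrix Filter

/-- A square real matrix is *transient* if every entry of `Q ^ t` tends to `0` as `t → ∞`. -/
def Matrix.Transient {n : ℕ} (Q : Matrix (Fin n) (Fin n) ℝ) : Prop :=
  ∀ i j, Tendsto (fun t : ℕ => (Q ^ t) i j) atTop (nhds 0)

section Aux
open Finset

namespace SubstochasticAux

variable {n : ℕ}

lemma pow_entry_nonneg (Q : Matrix (Fin n) (Fin n) ℝ) (hnn : ∀ i j, 0 ≤ Q i j) :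
    ∀ t i j, 0 ≤ (Q ^ t) i j := by
  intro t
  induction t with
  | zero => intro i j; simp [Matrix.one_apply]; split <;> norm_num
  | succ t ih =>
    intro i j
    rw [pow_succ, Matrix.mul_apply]
    exact Finset.sum_nonneg fun k _ => mul_nonneg (ih i k) (hnn k j)

lemma rowsum_add (Q : Matrix (Fin n) (Fin n) ℝ) (s t : ℕ) (i : Fin n) :
    ∑ j, (Q ^ (s + t)) i j = ∑ k, (Q ^ s) i k * ∑ j, (Q ^ t) k j := by
  rw [pow_add]
  simp only [Matrix.mul_apply, Finset.mul_sum]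
  rw [Finset.sum_comm]

lemma rowsum_le_one (Q : Matrix (Fin n) (Fin n) ℝ) (hnn : ∀ i j, 0 ≤ Q i j)
    (hrow : ∀ i, ∑ j, Q i j ≤ 1) : ∀ t i, ∑ j, (Q ^ t) i j ≤ 1 := by
  intro t
  induction t with
  | zero => intro i; simp [Matrix.one_apply]
  | succ t ih =>
    intro i
    have h1 : (t + 1) = 1 + t := by omega
    rw [h1, rowsum_add]
    calc ∑ k, (Q ^ 1) i k * ∑ j, (Q ^ t) k j ≤ ∑ k, (Q ^ 1) i k := by
          refine Finset.sum_le_sum fun k _ => ?_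
          exact mul_le_of_le_one_right (by simpa using hnn i k) (ih k)
      _ ≤ 1 := by simpa using hrow i

lemma rowsum_antitone (Q : Matrix (Fin n) (Fin n) ℝ) (hnn : ∀ i j, 0 ≤ Q i j)
    (hrow : ∀ i, ∑ j, Q i j ≤ 1) (i : Fin n) :
    Antitone (fun t => ∑ j, (Q ^ t) i j) := by
  refine antitone_nat_of_succ_le fun t => ?_
  show ∑ j, (Q ^ (t + 1)) i j ≤ ∑ j, (Q ^ t) i j
  rw [rowsum_add]
  refine Finset.sum_le_sum fun k _ => ?_
  have h1 : ∑ j, (Q ^ 1) k j ≤ 1 := by simpa using hrow k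
  exact mul_le_of_le_one_right (pow_entry_nonneg Q hnn t i k) h1

/-- Key equality characterization for row sums equal to 1. -/
lemma rowsum_succ_eq_one_iff (Q : Matrix (Fin n) (Fin n) ℝ) (hnn : ∀ i j, 0 ≤ Q i j)
    (hrow : ∀ i, ∑ j, Q i j ≤ 1) (t : ℕ) (i : Fin n) :
    (∑ j, (Q ^ (t + 1)) i j = 1) ↔
      (∑ k, Q i k = 1 ∧ ∀ k, Q i k ≠ 0 → ∑ j, (Q ^ t) k j = 1) := by
  have h1 : (t + 1) = 1 + t := by omega
  have hid : ∑ j, (Q ^ (t + 1)) i j = ∑ k, Q i k * ∑ j, (Q ^ t) k j := by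
    rw [h1, rowsum_add]; simp
  rw [hid]
  constructor
  · intro h
    have hle : ∀ k ∈ Finset.univ, Q i k * ∑ j, (Q ^ t) k j ≤ Q i k := fun k _ =>
      mul_le_of_le_one_right (hnn i k) (rowsum_le_one Q hnn hrow t k)
    have hsum_le : ∑ k, Q i k * ∑ j, (Q ^ t) k j ≤ ∑ k, Q i k := Finset.sum_le_sum hle
    have hQ1 : ∑ k, Q i k = 1 := le_antisymm (hrow i) (h ▸ hsum_le)
    have heq : ∀ k ∈ Finset.univ, Q i k * ∑ j, (Q ^ t) k j = Q i k := by
      rw [← Finset.sum_eq_sum_iff_of_le hle]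
      rw [h, hQ1]
    refine ⟨hQ1, fun k hk => ?_⟩
    have h2 := heq k (Finset.mem_univ k)
    have h3 : Q i k * ∑ j, (Q ^ t) k j = Q i k * 1 := by rw [h2, mul_one]
    exact mul_left_cancel₀ hk h3
  · rintro ⟨hQ1, hall⟩
    have : ∀ k ∈ Finset.univ, Q i k * ∑ j, (Q ^ t) k j = Q i k := by
      intro k _
      by_cases hk : Q i k = 0
      · simp [hk]
      · rw [hall k hk, mul_one]
    rw [Finset.sum_congr rfl this, hQ1]

end SubstochasticAux

namespace SubstochasticAux2
open SubstochasticAux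

variable {n : ℕ}

/-- The set of states whose row sum at time `t` equals `1`. -/
noncomputable def Sset (Q : Matrix (Fin n) (Fin n) ℝ) (t : ℕ) : Finset (Fin n) :=
  Finset.univ.filter fun k => ∑ j, (Q ^ t) k j = 1

lemma mem_Sset_succ (Q : Matrix (Fin n) (Fin n) ℝ) (hnn : ∀ i j, 0 ≤ Q i j)
    (hrow : ∀ i, ∑ j, Q i j ≤ 1) (t : ℕ) (k : Fin n) :
    k ∈ Sset Q (t + 1) ↔ (∑ m, Q k m = 1 ∧ ∀ m, Q k m ≠ 0 → m ∈ Sset Q t) := by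
  simp [Sset, rowsum_succ_eq_one_iff Q hnn hrow]

lemma Sset_succ_subset (Q : Matrix (Fin n) (Fin n) ℝ) (hnn : ∀ i j, 0 ≤ Q i j)
    (hrow : ∀ i, ∑ j, Q i j ≤ 1) : ∀ t, Sset Q (t + 1) ⊆ Sset Q t := by
  intro t
  induction t with
  | zero => intro k _; simp [Sset, Matrix.one_apply]
  | succ t ih =>
    intro k hk
    rw [mem_Sset_succ Q hnn hrow] at hk ⊢
    exact ⟨hk.1, fun m hm => ih (hk.2 m hm)⟩

lemma Sset_stab (Q : Matrix (Fin n) (Fin n) ℝ) (hnn : ∀ i j, 0 ≤ Q i j)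
    (hrow : ∀ i, ∑ j, Q i j ≤ 1) (t : ℕ) (heq : Sset Q t = Sset Q (t + 1)) :
    ∀ s, Sset Q (t + s) = Sset Q t := by
  intro s
  induction s with
  | zero => rfl
  | succ s ih =>
    have : t + (s + 1) = (t + s) + 1 := by omega
    rw [this]
    ext k
    rw [mem_Sset_succ Q hnn hrow]
    simp only [ih]
    rw [← mem_Sset_succ Q hnn hrow, ← heq]

end SubstochasticAux2

open SubstochasticAux SubstochasticAux2 in
theorem substochastic_transient_iff' {n : ℕ} (Q : Matrix (Fin n) (Fin n) ℝ)
    (hnn : ∀ i j, 0 ≤ Q i j) (hrow : ∀ i, ∑ j, Q i j ≤ 1) :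
    (∀ i j, Tendsto (fun t : ℕ => (Q ^ t) i j) atTop (nhds 0)) ↔
      ∀ i, ∑ j, (Q ^ n) i j < 1 := by
  constructor
  · intro htrans i
    by_contra hlt
    have h1 : ∑ j, (Q ^ n) i j = 1 :=
      le_antisymm (rowsum_le_one Q hnn hrow n i) (not_lt.mp hlt)
    have hiSn : i ∈ Sset Q n := by simp [Sset, h1]
    obtain ⟨t₀, ht₀, heq⟩ : ∃ t₀ < n, Sset Q t₀ = Sset Q (t₀ + 1) := by
      by_contra hno
      push_neg at hno
      have hchain : ∀ t ≤ n, (Sset Q t).card + t ≤ n := by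
        intro t
        induction t with
        | zero =>
          intro _
          have : (Sset Q 0).card ≤ (Finset.univ : Finset (Fin n)).card :=
            Finset.card_le_card (Finset.filter_subset _ _)
          simpa using this
        | succ t ih =>
          intro ht
          have hss : Sset Q (t + 1) ⊂ Sset Q t :=
            (Finset.ssubset_iff_subset_ne).mpr
              ⟨Sset_succ_subset Q hnn hrow t, fun h => hno t (by omega) h.symm⟩
          have := Finset.card_lt_card hss
          have := ih (by omega)
          omega
      have := hchain n le_rfl
      have hempty : Sset Q n = ∅ := Finset.card_eq_zero.mp (by omega)
      rw [hempty] at hiSn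
      exact absurd hiSn (Finset.notMem_empty i)
    have hstable := Sset_stab Q hnn hrow t₀ heq
    have hn : Sset Q n = Sset Q t₀ := by
      have := hstable (n - t₀)
      rwa [Nat.add_sub_cancel' ht₀.le] at this
    have hev : ∀ s ≥ t₀, ∑ j, (Q ^ s) i j = 1 := by
      intro s hs
      have h2 : i ∈ Sset Q (t₀ + (s - t₀)) := by
        rw [hstable (s - t₀), ← hn]; exact hiSn
      rw [Nat.add_sub_cancel' hs] at h2
      simpa [Sset] using h2
    have hlim0 : Tendsto (fun t => ∑ j, (Q ^ t) i j) atTop (nhds 0) := by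
      have := tendsto_finset_sum (Finset.univ : Finset (Fin n))
        (fun j (_ : j ∈ Finset.univ) => htrans i j)
      simpa using this
    have hlim1 : Tendsto (fun t => ∑ j, (Q ^ t) i j) atTop (nhds 1) := by
      refine Tendsto.congr' ?_ tendsto_const_nhds
      filter_upwards [eventually_ge_atTop t₀] with s hs
      exact (hev s hs).symm
    exact one_ne_zero (tendsto_nhds_unique hlim1 hlim0)
  · intro h i j
    rcases Nat.eq_zero_or_pos n with hn0 | hnpos
    · subst hn0; exact i.elim0
    obtain ⟨i₀, -, hmax⟩ := Finset.exists_max_image Finset.univ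
      (fun k => ∑ j, (Q ^ n) k j) ⟨i, Finset.mem_univ i⟩
    set c : ℝ := ∑ j, (Q ^ n) i₀ j with hc
    have hc1 : c < 1 := h i₀
    have hc0 : 0 ≤ c := Finset.sum_nonneg fun j _ => pow_entry_nonneg Q hnn n i₀ j
    have hck : ∀ k i', ∑ j, (Q ^ (n * k)) i' j ≤ c ^ k := by
      intro k
      induction k with
      | zero => intro i'; simpa using rowsum_le_one Q hnn hrow 0 i'  -- n*0 = 0… check
      | succ k ih =>
        intro i'
        have hmul : n * (k + 1) = n * k + n := by ring
        rw [hmul, rowsum_add]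
        calc ∑ m, (Q ^ (n * k)) i' m * ∑ j, (Q ^ n) m j
            ≤ ∑ m, (Q ^ (n * k)) i' m * c := by
              refine Finset.sum_le_sum fun m _ => ?_
              exact mul_le_mul_of_nonneg_left (hmax m (Finset.mem_univ m))
                (pow_entry_nonneg Q hnn _ i' m)
          _ = (∑ m, (Q ^ (n * k)) i' m) * c := by rw [Finset.sum_mul]
          _ ≤ c ^ k * c := mul_le_mul_of_nonneg_right (ih i') hc0
          _ = c ^ (k + 1) := by ring
    have hbound : ∀ t, (Q ^ t) i j ≤ c ^ (t / n) := by
      intro t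
      have h1 : (Q ^ t) i j ≤ ∑ j', (Q ^ t) i j' :=
        Finset.single_le_sum (fun j' _ => pow_entry_nonneg Q hnn t i j') (Finset.mem_univ j)
      have h2 : ∑ j', (Q ^ t) i j' ≤ ∑ j', (Q ^ (n * (t / n))) i j' := by
        exact rowsum_antitone Q hnn hrow i (Nat.mul_div_le t n)
      exact h1.trans (h2.trans (hck (t / n) i))
    have hdiv : Tendsto (fun t : ℕ => t / n) atTop atTop := by
      refine tendsto_atTop_atTop.mpr fun b => ⟨b * n, fun a ha => ?_⟩
      exact (Nat.le_div_iff_mul_le hnpos).mpr ha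
    have hg : Tendsto (fun t : ℕ => c ^ (t / n)) atTop (nhds 0) :=
      (tendsto_pow_atTop_nhds_zero_of_lt_one hc0 hc1).comp hdiv
    exact squeeze_zero (fun t => pow_entry_nonneg Q hnn t i j) hbound hg


/-- a substochastic `n × n` matrix is transient iff every row sum of `Q ^ n` is
strictly less than `1` (termination occurs with positive probability within `n` transitions). -/
theorem substochastic_transient_iff {n : ℕ} (Q : Matrix (Fin n) (Fin n) ℝ)
    (hnn : ∀ i j, 0 ≤ Q i j) (hrow : ∀ i, ∑ j, Q i j ≤ 1) :
    Q.Transient ↔ ∀ i, ∑ j, (Q ^ n) i j < 1 :=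
  substochastic_transient_iff' Q hnn hrow

end Aux
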